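/- Let M be a positive integer and h > 0. Let β, γ be grid functions on {0,…,M} with β₀ = β_M = γ₀ = γ_M = 0 such that γᵢ = δₓ²βᵢ − (h²/12)·δₓ²γᵢ for 1 ≤ i ≤ M−1. Then ‖γ‖ ≤ (3/h)·|β|₁. -/
import Mathlib


/-- The second difference quotient `δₓ²vᵢ = (v_{i+1} - 2vᵢ + v_{i-1})/h²`. -/
noncomputable def dx2 (h : ℝ) (v : ℕ → ℝ) (i : ℕ) : ℝ :=
  (v (i + 1) - 2 * v i + v (i - 1)) / h ^ 2

/-- Reindexing a sum over `Icc 1 (M-1)` by `i ↦ i + 1`. -/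
lemma reindex_aux (M : ℕ) (hM : 1 ≤ M) (f : ℕ → ℝ) :
    ∑ i ∈ Finset.Icc 1 (M - 1), f (i + 1) = ∑ i ∈ Finset.Icc 2 M, f i := by
  have : Finset.Icc 2 M = (Finset.Icc 1 (M - 1)).map (addRightEmbedding 1) := by
    rw [Finset.map_add_right_Icc]
    congr 1
    omega
  rw [this, Finset.sum_map]
  rfl

/-- Reindexing a sum over `Icc 0 (M-1)` by `i ↦ i + 1`. -/
lemma reindex_aux0 (M : ℕ) (hM : 1 ≤ M) (f : ℕ → ℝ) :
    ∑ i ∈ Finset.Icc 0 (M - 1), f (i + 1) = ∑ i ∈ Finset.Icc 1 M, f i := by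
  have : Finset.Icc 1 M = (Finset.Icc 0 (M - 1)).map (addRightEmbedding 1) := by
    rw [Finset.map_add_right_Icc]
    congr 1
    omega
  rw [this, Finset.sum_map]
  rfl

/-- Summation by parts for the second difference. -/
lemma sbp (M : ℕ) (hM : 1 ≤ M) (γ v : ℕ → ℝ) (hγ0 : γ 0 = 0) (hγM : γ M = 0) :
    ∑ i ∈ Finset.Icc 1 (M - 1), γ i * (v (i + 1) - 2 * v i + v (i - 1))
      = -∑ i ∈ Finset.Icc 1 M, (γ i - γ (i - 1)) * (v i - v (i - 1)) := by
  have split : ∀ i, γ i * (v (i + 1) - 2 * v i + v (i - 1))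
      = γ i * (v (i + 1) - v i) - γ i * (v i - v (i - 1)) := by intro i; ring
  rw [Finset.sum_congr rfl fun i _ => split i, Finset.sum_sub_distrib]
  -- first sum: reindex to Icc 2 M
  have h1 : ∑ i ∈ Finset.Icc 1 (M - 1), γ i * (v (i + 1) - v i)
      = ∑ i ∈ Finset.Icc 2 M, γ (i - 1) * (v i - v (i - 1)) := by
    rw [← reindex_aux M hM (fun i => γ (i - 1) * (v i - v (i - 1)))]
    apply Finset.sum_congr rfl
    intro i _
    simp
  have hins1 : Finset.Icc 1 M = insert 1 (Finset.Icc 2 M) := by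
    ext x; simp [Finset.mem_Icc]; omega
  have h1' : ∑ i ∈ Finset.Icc 1 M, γ (i - 1) * (v i - v (i - 1))
      = ∑ i ∈ Finset.Icc 2 M, γ (i - 1) * (v i - v (i - 1)) := by
    rw [hins1, Finset.sum_insert (by simp)]
    simp [hγ0]
  have hins2 : Finset.Icc 1 M = insert M (Finset.Icc 1 (M - 1)) := by
    ext x; simp [Finset.mem_Icc]; omega
  have h2 : ∑ i ∈ Finset.Icc 1 M, γ i * (v i - v (i - 1))
      = ∑ i ∈ Finset.Icc 1 (M - 1), γ i * (v i - v (i - 1)) := by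
    rw [hins2, Finset.sum_insert (by simp [Finset.mem_Icc]; omega)]
    simp [hγM]
  rw [h1, ← h1', ← h2, ← Finset.sum_sub_distrib, ← Finset.sum_neg_distrib]
  apply Finset.sum_congr rfl
  intro i _
  ring

/-- If `γᵢ = δₓ²βᵢ - (h²/12)δₓ²γᵢ` for `1 ≤ i ≤ M-1` and `β, γ` vanish at the endpoints,
then `‖γ‖ ≤ (3/h)·|β|₁`. -/
theorem stmt_15 (M : ℕ) (hM : 0 < M) (h : ℝ) (hh : 0 < h)
    (β γ : ℕ → ℝ) (hβ0 : β 0 = 0) (hβM : β M = 0) (hγ0 : γ 0 = 0) (hγM : γ M = 0)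
    (hrel : ∀ i, 1 ≤ i → i ≤ M - 1 → γ i = dx2 h β i - h ^ 2 / 12 * dx2 h γ i) :
    Real.sqrt (h * ∑ i ∈ Finset.Icc 1 (M - 1), (γ i) ^ 2)
      ≤ 3 / h * Real.sqrt (h * ∑ i ∈ Finset.Icc 1 M, ((β i - β (i - 1)) / h) ^ 2) := by
  set S := ∑ i ∈ Finset.Icc 1 (M - 1), (γ i) ^ 2 with hS
  set P := ∑ i ∈ Finset.Icc 1 M, (γ i - γ (i - 1)) * (β i - β (i - 1)) with hP
  set Qγ := ∑ i ∈ Finset.Icc 1 M, (γ i - γ (i - 1)) ^ 2 with hQγ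
  set Qβ := ∑ i ∈ Finset.Icc 1 M, (β i - β (i - 1)) ^ 2 with hQβ
  clear_value S P Qγ Qβ
  have hS0 : 0 ≤ S := by rw [hS]; exact Finset.sum_nonneg fun i _ => sq_nonneg _
  have hQβ0 : 0 ≤ Qβ := by rw [hQβ]; exact Finset.sum_nonneg fun i _ => sq_nonneg _
  have hQγ0 : 0 ≤ Qγ := by rw [hQγ]; exact Finset.sum_nonneg fun i _ => sq_nonneg _
  have hh2 : (0:ℝ) < h ^ 2 := by positivity
  -- Key identity: S = -P/h² + Qγ/12
  have key : S = -P / h ^ 2 + Qγ / 12 := by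
    have step : ∀ i ∈ Finset.Icc 1 (M - 1), (γ i) ^ 2
        = γ i * (β (i + 1) - 2 * β i + β (i - 1)) / h ^ 2
          - (γ i * (γ (i + 1) - 2 * γ i + γ (i - 1))) / 12 := by
      intro i hi
      simp only [Finset.mem_Icc] at hi
      have hri := hrel i hi.1 hi.2
      calc (γ i) ^ 2 = γ i * (dx2 h β i - h ^ 2 / 12 * dx2 h γ i) := by
            rw [← hri]; ring
        _ = _ := by unfold dx2; field_simp
    rw [hS, Finset.sum_congr rfl step, Finset.sum_sub_distrib]
    have e1 : ∑ i ∈ Finset.Icc 1 (M - 1), γ i * (β (i + 1) - 2 * β i + β (i - 1)) / h ^ 2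
        = -P / h ^ 2 := by
      rw [← Finset.sum_div, sbp M hM γ β hγ0 hγM, hP]
    have e2 : ∑ i ∈ Finset.Icc 1 (M - 1), γ i * (γ (i + 1) - 2 * γ i + γ (i - 1)) / 12
        = -Qγ / 12 := by
      rw [← Finset.sum_div, sbp M hM γ γ hγ0 hγM, hQγ]
      congr 2
      exact Finset.sum_congr rfl fun i _ => (pow_two _).symm
    rw [e1, e2]; ring
  -- Inverse estimate: Qγ ≤ 4 S
  have inv : Qγ ≤ 4 * S := by
    have hb : ∀ i ∈ Finset.Icc 1 M, (γ i - γ (i - 1)) ^ 2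
        ≤ 2 * (γ i) ^ 2 + 2 * (γ (i - 1)) ^ 2 := by
      intro i _
      nlinarith [sq_nonneg (γ i + γ (i - 1))]
    have hs1 : ∑ i ∈ Finset.Icc 1 M, (γ i) ^ 2 = S := by
      have hins : Finset.Icc 1 M = insert M (Finset.Icc 1 (M - 1)) := by
        ext x; simp [Finset.mem_Icc]; omega
      rw [hins, Finset.sum_insert (by simp [Finset.mem_Icc]; omega)]
      simp [hγM, hS]
    have hs2 : ∑ i ∈ Finset.Icc 1 M, (γ (i - 1)) ^ 2 = S := by
      rw [← reindex_aux0 M hM (fun i => (γ (i - 1)) ^ 2)]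
      have hins : Finset.Icc 0 (M - 1) = insert 0 (Finset.Icc 1 (M - 1)) := by
        ext x; simp [Finset.mem_Icc]; omega
      rw [hins, Finset.sum_insert (by simp)]
      simp only [Nat.add_sub_cancel]
      simp [hγ0, hS]
    calc Qγ ≤ ∑ i ∈ Finset.Icc 1 M, (2 * (γ i) ^ 2 + 2 * (γ (i - 1)) ^ 2) := by
          rw [hQγ]; exact Finset.sum_le_sum hb
      _ = 4 * S := by
          rw [Finset.sum_add_distrib, ← Finset.mul_sum, ← Finset.mul_sum, hs1, hs2]; ring
  -- Cauchy-Schwarz: P² ≤ Qγ Qβ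
  have cs : P ^ 2 ≤ Qγ * Qβ := by
    rw [hP, hQγ, hQβ]
    exact Finset.sum_mul_sq_le_sq_mul_sq _ _ _
  -- From key and inv: (2/3) S ≤ -P/h²
  have h23 : 2 / 3 * S ≤ -P / h ^ 2 := by
    have : S ≤ -P / h ^ 2 + 4 * S / 12 := by
      rw [key]; gcongr; linarith
    linarith
  -- Hence S² h⁴ ≤ 9 S Qβ
  have h23' : 2 / 3 * S * h ^ 2 ≤ -P := (le_div_iff₀ hh2).mp h23
  have hsq : (2 / 3 * S * h ^ 2) ^ 2 ≤ P ^ 2 := by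
    have h0 : (0:ℝ) ≤ 2 / 3 * S * h ^ 2 := by positivity
    have := sq_le_sq' (by linarith) h23'
    calc (2 / 3 * S * h ^ 2) ^ 2 ≤ (-P) ^ 2 := this
      _ = P ^ 2 := by ring
  have hprod : Qγ * Qβ ≤ 4 * S * Qβ := mul_le_mul_of_nonneg_right inv hQβ0
  have hS2 : S ^ 2 * h ^ 4 ≤ 9 * S * Qβ := by nlinarith [hsq, cs, hprod]
  -- Conclude
  have hrhs : h * ∑ i ∈ Finset.Icc 1 M, ((β i - β (i - 1)) / h) ^ 2 = Qβ / h := by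
    rw [Finset.mul_sum, hQβ, Finset.sum_div]
    apply Finset.sum_congr rfl
    intro i _
    rw [div_pow]
    field_simp
  rw [hrhs]
  have hgoal : h * S ≤ (3 / h) ^ 2 * (Qβ / h) := by
    have hR : (3 / h) ^ 2 * (Qβ / h) = 9 * Qβ / h ^ 3 := by
      field_simp
      ring
    rw [hR, le_div_iff₀ (by positivity : (0:ℝ) < h ^ 3)]
    rcases eq_or_lt_of_le hS0 with h0 | h0
    · rw [← h0]
      have e0 : h * 0 * h ^ 3 = 0 := by ring
      rw [e0]
      positivity
    · have hcancel : S * h ^ 4 ≤ 9 * Qβ := by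
        have h9 : S * (S * h ^ 4) ≤ S * (9 * Qβ) := by
          have e1 : S * (S * h ^ 4) = S ^ 2 * h ^ 4 := by ring
          have e2 : S * (9 * Qβ) = 9 * S * Qβ := by ring
          rw [e1, e2]
          exact hS2
        exact le_of_mul_le_mul_left h9 h0
      calc h * S * h ^ 3 = S * h ^ 4 := by ring
        _ ≤ 9 * Qβ := hcancel
  calc Real.sqrt (h * S) ≤ Real.sqrt ((3 / h) ^ 2 * (Qβ / h)) := Real.sqrt_le_sqrt hgoal
    _ = 3 / h * Real.sqrt (Qβ / h) := by
        rw [Real.sqrt_mul (by positivity), Real.sqrt_sq (by positivity)]
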